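/- Define the noisy likelihood p_t(y | x) = (1/p_t(x)) ∫ N(y; x₀, σ_y²I) N(x; x₀, σ_t²I) dμ₀(x₀). Then for every x ∈ ℝⁿ, p_t(y | ·) is positive and differentiable at x and ∇_x log p_t(y | x) = (σ̃²/σ_t²) · (∇ log p̃)(x̃(x)) − ∇ log p_t(x) − (σ_y² + σ_t²)^{−1}(x − y). (Eq. (13): the exact noisy likelihood score for denoising.) -/

import Mathlib

open MeasureTheory Real

/-- Isotropic Gaussian density on ℝⁿ with mean `m` and covariance `v • I`
(`v` is the variance, i.e. `v = σ²`): `N(x; m, σ²I) = (2πσ²)^{-n/2} exp(-‖x-m‖²/(2σ²))`. -/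
noncomputable def gaussDensity (n : ℕ) (v : ℝ) (m x : EuclideanSpace ℝ (Fin n)) : ℝ :=
  (2 * π * v) ^ (-(n : ℝ) / 2) * Real.exp (-‖x - m‖ ^ 2 / (2 * v))

/-! Completing the square in `x₀`, the integrand `N(y; x₀, σ_y²I) N(x; x₀, σ_t²I)` equals
`N(x; y, (σ_y² + σ_t²)I) · N(x̃(x); x₀, σ̃²I)`, so that
`p_t(y | x) = N(x; y, (σ_y² + σ_t²)I) · p̃(x̃(x)) / p_t(x)`. The score is then the sum of the
log-gradients of the three factors, the middle one picking up the slope `σ̃²/σ_t²` of the affine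
map `x̃`. That the smoothed densities are positive and differentiable follows by differentiating
under the integral sign: the gradient of `N(·; x₀, vI)` is bounded uniformly in `x₀`. -/

section Gradient

variable {F : Type*} [NormedAddCommGroup F] [InnerProductSpace ℝ F] [CompleteSpace F]
  {f g h : F → ℝ} {f' g' h' x : F}

theorem HasGradientAt.add (hf : HasGradientAt f f' x) (hg : HasGradientAt g g' x) :
    HasGradientAt (fun z => f z + g z) (f' + g') x := by
  rw [hasGradientAt_iff_hasFDerivAt, map_add]
  exact hf.hasFDerivAt.add hg.hasFDerivAt

theorem HasGradientAt.sub (hf : HasGradientAt f f' x) (hg : HasGradientAt g g' x) :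
    HasGradientAt (fun z => f z - g z) (f' - g') x := by
  rw [hasGradientAt_iff_hasFDerivAt, map_sub]
  exact hf.hasFDerivAt.sub hg.hasFDerivAt

theorem HasGradientAt.log (hf : HasGradientAt f f' x) (hx : f x ≠ 0) :
    HasGradientAt (fun z => Real.log (f z)) ((f x)⁻¹ • f') x := by
  rw [hasGradientAt_iff_hasFDerivAt, map_smul]
  exact hf.hasFDerivAt.log hx

theorem HasGradientAt.comp_smul_add {c : ℝ} {w : F} (hf : HasGradientAt f f' (c • x + w)) :
    HasGradientAt (fun z => f (c • z + w)) (c • f') x := by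
  rw [hasGradientAt_iff_hasFDerivAt, map_smul]
  refine (hf.hasFDerivAt.comp x (((hasFDerivAt_id x).const_smul c).add_const w)).congr_fderiv ?_
  ext z
  simp

theorem hasGradientAt_log_mul_div (hf : ∀ z, 0 < f z) (hg : ∀ z, 0 < g z) (hh : ∀ z, 0 < h z)
    (hf' : HasGradientAt (fun z => Real.log (f z)) f' x)
    (hg' : HasGradientAt (fun z => Real.log (g z)) g' x)
    (hh' : HasGradientAt (fun z => Real.log (h z)) h' x) :
    HasGradientAt (fun z => Real.log (f z * g z / h z)) (f' + g' - h') x := by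
  refine ((hf'.add hg').sub hh').congr_of_eventuallyEq (.of_forall fun z => ?_)
  beta_reduce
  rw [log_div (mul_pos (hf z) (hg z)).ne' (hh z).ne', log_mul (hf z).ne' (hg z).ne']

end Gradient

theorem mul_exp_neg_sq_div_le_sqrt {v : ℝ} (hv : 0 < v) (r : ℝ) :
    r * exp (-r ^ 2 / (2 * v)) ≤ √v := by
  obtain ⟨s, hs, rfl⟩ : ∃ s, 0 < s ∧ v = s ^ 2 := ⟨√v, sqrt_pos.mpr hv, (sq_sqrt hv.le).symm⟩
  rw [sqrt_sq hs.le]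
  have hr : r ≤ s * exp (r ^ 2 / (2 * s ^ 2)) := calc
    r ≤ s * (r ^ 2 / (2 * s ^ 2) + 1) := by
      field_simp; nlinarith [sq_nonneg (s - r), sq_nonneg s]
    _ ≤ s * exp (r ^ 2 / (2 * s ^ 2)) := by gcongr; exact add_one_le_exp _
  rw [neg_div, exp_neg, ← div_eq_mul_inv, div_le_iff₀ (exp_pos _)]
  exact hr

theorem norm_sub_sq_div_add_norm_sub_sq_div {F : Type*} [NormedAddCommGroup F]
    [InnerProductSpace ℝ F] {a b : ℝ} (ha : 0 < a) (hb : 0 < b) (m x y : F) :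
    ‖y - m‖ ^ 2 / (2 * a) + ‖x - m‖ ^ 2 / (2 * b)
      = ‖x - y‖ ^ 2 / (2 * (a + b))
        + ‖(a⁻¹ + b⁻¹)⁻¹ • (a⁻¹ • y + b⁻¹ • x) - m‖ ^ 2 / (2 * (a⁻¹ + b⁻¹)⁻¹) := by
  have hc : (a⁻¹ + b⁻¹)⁻¹ = a * b / (a + b) := by field_simp; ring
  rw [hc]
  simp only [← real_inner_self_eq_norm_sq, inner_sub_left, inner_sub_right, inner_add_left,
    inner_add_right, real_inner_smul_left, real_inner_smul_right, real_inner_comm m,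
    real_inner_comm x y]
  field_simp
  ring

section Gaussian

variable {n : ℕ} {v : ℝ}

local notation "E" => EuclideanSpace ℝ (Fin n)

theorem gaussDensity_pos (hv : 0 < v) (m x : E) : 0 < gaussDensity n v m x := by
  unfold gaussDensity
  positivity

theorem gaussDensity_le (hv : 0 ≤ v) (m x : E) :
    gaussDensity n v m x ≤ (2 * π * v) ^ (-(n : ℝ) / 2) := by
  unfold gaussDensity
  refine mul_le_of_le_one_right (by positivity) (exp_le_one_iff.mpr ?_)
  exact div_nonpos_of_nonpos_of_nonneg (neg_nonpos.mpr (by positivity)) (by positivity)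

theorem continuous_gaussDensity_mean (x : E) : Continuous fun m => gaussDensity n v m x := by
  unfold gaussDensity
  fun_prop

theorem hasGradientAt_gaussDensity (m x : E) :
    HasGradientAt (gaussDensity n v m) (-(gaussDensity n v m x / v) • (x - m)) x := by
  have h := ((((hasFDerivAt_id x).sub_const m).norm_sq).const_mul (-(2 * v)⁻¹)).exp.const_mul
    ((2 * π * v) ^ (-(n : ℝ) / 2))
  rw [hasGradientAt_iff_hasFDerivAt]
  refine (h.congr_fderiv ?_).congr_of_eventuallyEq (Filter.Eventually.of_forall fun z => ?_)
  · ext w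
    simp [gaussDensity, real_inner_comm w]
    ring_nf
  · simp only [gaussDensity, id]
    ring_nf

theorem hasGradientAt_log_gaussDensity (hv : 0 < v) (m x : E) :
    HasGradientAt (fun z => Real.log (gaussDensity n v m z)) (-(v⁻¹ • (x - m))) x := by
  have hg := gaussDensity_pos hv m x
  convert (hasGradientAt_gaussDensity m x).log hg.ne' using 1
  rw [smul_smul, ← neg_smul]
  field_simp

theorem norm_gradient_gaussDensity_le (hv : 0 < v) (m x : E) :
    ‖-(gaussDensity n v m x / v) • (x - m)‖ ≤ (2 * π * v) ^ (-(n : ℝ) / 2) / √v := by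
  rw [norm_smul, norm_neg, norm_of_nonneg (div_pos (gaussDensity_pos hv m x) hv).le,
    gaussDensity]
  calc (2 * π * v) ^ (-(n : ℝ) / 2) * exp (-‖x - m‖ ^ 2 / (2 * v)) / v * ‖x - m‖
      = (2 * π * v) ^ (-(n : ℝ) / 2) * (‖x - m‖ * exp (-‖x - m‖ ^ 2 / (2 * v))) / v := by ring
    _ ≤ (2 * π * v) ^ (-(n : ℝ) / 2) * √v / v := by
      gcongr
      exact mul_exp_neg_sq_div_le_sqrt hv _
    _ = (2 * π * v) ^ (-(n : ℝ) / 2) / √v := by rw [mul_div_assoc, sqrt_div_self', mul_one_div]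

variable {μ : Measure (EuclideanSpace ℝ (Fin n))}

theorem integrable_gaussDensity [IsFiniteMeasure μ] (hv : 0 ≤ v) (x : E) :
    Integrable (fun m => gaussDensity n v m x) μ := by
  refine .of_bound (continuous_gaussDensity_mean x).aestronglyMeasurable
    ((2 * π * v) ^ (-(n : ℝ) / 2)) (ae_of_all _ fun m => ?_)
  have hg : 0 ≤ gaussDensity n v m x := by unfold gaussDensity; positivity
  exact (norm_of_nonneg hg).trans_le (gaussDensity_le hv m x)

theorem integral_gaussDensity_pos [IsFiniteMeasure μ] [NeZero μ] (hv : 0 < v) (x : E) :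
    0 < ∫ m, gaussDensity n v m x ∂μ := by
  rw [integral_pos_iff_support_of_nonneg (fun m => (gaussDensity_pos hv m x).le)
    (integrable_gaussDensity hv.le x)]
  have : Function.support (fun m => gaussDensity n v m x) = Set.univ :=
    Function.support_eq_univ fun m => (gaussDensity_pos hv m x).ne'
  simp [this, NeZero.ne μ]

theorem differentiable_integral_gaussDensity [IsFiniteMeasure μ] (hv : 0 < v) :
    Differentiable ℝ fun x => ∫ m, gaussDensity n v m x ∂μ := by
  intro x
  have hcont (z : E) :
      Continuous fun m => InnerProductSpace.toDual ℝ E (-(gaussDensity n v m z / v) • (z - m)) :=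
    (InnerProductSpace.toDual ℝ E).continuous.comp (by unfold gaussDensity; fun_prop)
  exact (hasFDerivAt_integral_of_dominated_of_fderiv_le Filter.univ_mem
    (.of_forall fun z => (continuous_gaussDensity_mean z).aestronglyMeasurable)
    (integrable_gaussDensity hv.le x) (hcont x).aestronglyMeasurable
    (ae_of_all _ fun m z _ => (LinearIsometryEquiv.norm_map _ _).trans_le
      (norm_gradient_gaussDensity_le hv m z))
    (integrable_const _)
    (ae_of_all _ fun m z _ => (hasGradientAt_gaussDensity m z).hasFDerivAt)).differentiableAt

theorem gaussDensity_mul_gaussDensity {a b : ℝ} (ha : 0 < a) (hb : 0 < b) (m x y : E) :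
    gaussDensity n a m y * gaussDensity n b m x
      = gaussDensity n (a + b) y x
        * gaussDensity n (a⁻¹ + b⁻¹)⁻¹ m ((a⁻¹ + b⁻¹)⁻¹ • (a⁻¹ • y + b⁻¹ • x)) := by
  have hc : a * b = (a + b) * (a⁻¹ + b⁻¹)⁻¹ := by field_simp; ring
  have hconst : (2 * π * a) ^ (-(n : ℝ) / 2) * (2 * π * b) ^ (-(n : ℝ) / 2)
      = (2 * π * (a + b)) ^ (-(n : ℝ) / 2) * (2 * π * (a⁻¹ + b⁻¹)⁻¹) ^ (-(n : ℝ) / 2) := by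
    rw [← mul_rpow (by positivity) (by positivity), ← mul_rpow (by positivity) (by positivity)]
    congr 1
    linear_combination (4 * π ^ 2) * hc
  have hexp : exp (-‖y - m‖ ^ 2 / (2 * a)) * exp (-‖x - m‖ ^ 2 / (2 * b))
      = exp (-‖x - y‖ ^ 2 / (2 * (a + b)))
        * exp (-‖(a⁻¹ + b⁻¹)⁻¹ • (a⁻¹ • y + b⁻¹ • x) - m‖ ^ 2 / (2 * (a⁻¹ + b⁻¹)⁻¹)) := by
    rw [← exp_add, ← exp_add]
    congr 1
    linear_combination -norm_sub_sq_div_add_norm_sub_sq_div ha hb m x y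
  simp only [gaussDensity]
  rw [mul_mul_mul_comm, hconst, hexp, mul_mul_mul_comm]

theorem integral_gaussDensity_mul_gaussDensity {a b : ℝ} (ha : 0 < a) (hb : 0 < b) (x y : E) :
    ∫ m, gaussDensity n a m y * gaussDensity n b m x ∂μ
      = gaussDensity n (a + b) y x
        * ∫ m, gaussDensity n (a⁻¹ + b⁻¹)⁻¹ m ((a⁻¹ + b⁻¹)⁻¹ • (a⁻¹ • y + b⁻¹ • x)) ∂μ := by
  simp_rw [gaussDensity_mul_gaussDensity ha hb]
  exact integral_const_mul _ _

end Gaussian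

theorem exact_noisy_likelihood_score_denoising_general
    (n : ℕ)
    (μ₀ : Measure (EuclideanSpace ℝ (Fin n))) [IsProbabilityMeasure μ₀]
    (σt σy : ℝ) (hσt : 0 < σt) (hσy : 0 < σy)
    (y : EuclideanSpace ℝ (Fin n))
    -- the noise-perturbed prior density `p_t(x) = ∫ N(x; x₀, σ_t² I) dμ₀(x₀)`
    (pt : EuclideanSpace ℝ (Fin n) → ℝ)
    (hpt : ∀ x, pt x = ∫ x₀, gaussDensity n (σt ^ 2) x₀ x ∂μ₀)
    -- the noisy likelihood `p_t(y | x) = (1/p_t(x)) ∫ N(y; x₀, σ_y²I) N(x; x₀, σ_t²I) dμ₀(x₀)`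
    (lik : EuclideanSpace ℝ (Fin n) → ℝ)
    (hlik : ∀ x, lik x =
      (1 / pt x) * ∫ x₀, gaussDensity n (σy ^ 2) x₀ y * gaussDensity n (σt ^ 2) x₀ x ∂μ₀)
    -- `σ̃² = (σ_y⁻² + σ_t⁻²)⁻¹`
    (σtilde2 : ℝ) (hσtilde2 : σtilde2 = ((σy ^ 2)⁻¹ + (σt ^ 2)⁻¹)⁻¹)
    -- `x̃(x) = σ̃² (σ_y⁻² y + σ_t⁻² x)`
    (xtilde : EuclideanSpace ℝ (Fin n) → EuclideanSpace ℝ (Fin n))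
    (hxtilde : ∀ x, xtilde x = σtilde2 • ((σy ^ 2)⁻¹ • y + (σt ^ 2)⁻¹ • x))
    -- the noise-perturbed prior density at level `σ̃`: `p̃(z) = ∫ N(z; x₀, σ̃² I) dμ₀(x₀)`
    (ptilde : EuclideanSpace ℝ (Fin n) → ℝ)
    (hptilde : ∀ z, ptilde z = ∫ x₀, gaussDensity n σtilde2 x₀ z ∂μ₀) :
    ∀ x, 0 < lik x ∧ DifferentiableAt ℝ lik x ∧
      gradient (fun z => Real.log (lik z)) x
        = (σtilde2 / σt ^ 2) • gradient (fun z => Real.log (ptilde z)) (xtilde x)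
          - gradient (fun z => Real.log (pt z)) x
          - (σy ^ 2 + σt ^ 2)⁻¹ • (x - y) := by
  intro x
  have hσtilde2_pos : 0 < σtilde2 := hσtilde2 ▸ by positivity
  have hpt_pos (z) : 0 < pt z := hpt z ▸ integral_gaussDensity_pos (by positivity) z
  have hptilde_pos (z) : 0 < ptilde z := hptilde z ▸ integral_gaussDensity_pos hσtilde2_pos z
  have hpt_diff : Differentiable ℝ pt :=
    funext hpt ▸ differentiable_integral_gaussDensity (by positivity)
  have hptilde_diff : Differentiable ℝ ptilde :=
    funext hptilde ▸ differentiable_integral_gaussDensity hσtilde2_pos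
  have hG_pos := gaussDensity_pos (n := n) (by positivity : 0 < σy ^ 2 + σt ^ 2) y
  have hlik_eq :
      lik = fun z => gaussDensity n (σy ^ 2 + σt ^ 2) y z * ptilde (xtilde z) / pt z := by
    ext z
    rw [hlik, integral_gaussDensity_mul_gaussDensity (by positivity) (by positivity), hptilde,
      hxtilde, hσtilde2]
    ring
  have hlik_pos (z) : 0 < lik z :=
    hlik_eq ▸ div_pos (mul_pos (hG_pos z) (hptilde_pos _)) (hpt_pos z)
  have hPtilde : HasGradientAt (fun z => Real.log (ptilde (xtilde z)))
      ((σtilde2 / σt ^ 2) • gradient (fun z => Real.log (ptilde z)) (xtilde x)) x := by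
    have hxtilde_affine (z) : xtilde z = (σtilde2 / σt ^ 2) • z + (σtilde2 / σy ^ 2) • y := by
      rw [hxtilde]; module
    simp_rw [hxtilde_affine]
    exact .comp_smul_add ((hptilde_diff _).log (hptilde_pos _).ne').hasGradientAt
  have hscore : HasGradientAt (fun z => Real.log (lik z)) (-((σy ^ 2 + σt ^ 2)⁻¹ • (x - y))
      + (σtilde2 / σt ^ 2) • gradient (fun z => Real.log (ptilde z)) (xtilde x)
      - gradient (fun z => Real.log (pt z)) x) x := by
    rw [hlik_eq]
    exact hasGradientAt_log_mul_div hG_pos (fun z => hptilde_pos _) hpt_pos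
      (hasGradientAt_log_gaussDensity (by positivity) y x) hPtilde
      ((hpt_diff x).log (hpt_pos x).ne').hasGradientAt
  refine ⟨hlik_pos x, ?_, by rw [hscore.gradient]; abel⟩
  exact hscore.differentiableAt.exp.congr_of_eventuallyEq
    (.of_forall fun z => (exp_log (hlik_pos z)).symm)

/-- Eq. (13): the exact noisy likelihood score for denoising.  With
`p_t(y | x) = (1/p_t(x)) ∫ N(y; x₀, σ_y²I) N(x; x₀, σ_t²I) dμ₀(x₀)`, for every `x`
`p_t(y | ·)` is positive and differentiable at `x` and
`∇ log p_t(y | x) = (σ̃²/σ_t²) ∇ log p̃ (x̃(x)) − ∇ log p_t(x) − (σ_y² + σ_t²)⁻¹ (x − y)`. -/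
theorem exact_noisy_likelihood_score_denoising
    (n : ℕ) (hn : 1 ≤ n)
    (μ₀ : Measure (EuclideanSpace ℝ (Fin n))) [IsProbabilityMeasure μ₀]
    (σt σy : ℝ) (hσt : 0 < σt) (hσy : 0 < σy)
    (y : EuclideanSpace ℝ (Fin n))
    -- the noise-perturbed prior density `p_t(x) = ∫ N(x; x₀, σ_t² I) dμ₀(x₀)`
    (pt : EuclideanSpace ℝ (Fin n) → ℝ)
    (hpt : ∀ x, pt x = ∫ x₀, gaussDensity n (σt ^ 2) x₀ x ∂μ₀)
    -- the noisy likelihood `p_t(y | x) = (1/p_t(x)) ∫ N(y; x₀, σ_y²I) N(x; x₀, σ_t²I) dμ₀(x₀)`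
    (lik : EuclideanSpace ℝ (Fin n) → ℝ)
    (hlik : ∀ x, lik x =
      (1 / pt x) * ∫ x₀, gaussDensity n (σy ^ 2) x₀ y * gaussDensity n (σt ^ 2) x₀ x ∂μ₀)
    -- `σ̃² = (σ_y⁻² + σ_t⁻²)⁻¹`
    (σtilde2 : ℝ) (hσtilde2 : σtilde2 = ((σy ^ 2)⁻¹ + (σt ^ 2)⁻¹)⁻¹)
    -- `x̃(x) = σ̃² (σ_y⁻² y + σ_t⁻² x)`
    (xtilde : EuclideanSpace ℝ (Fin n) → EuclideanSpace ℝ (Fin n))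
    (hxtilde : ∀ x, xtilde x = σtilde2 • ((σy ^ 2)⁻¹ • y + (σt ^ 2)⁻¹ • x))
    -- the noise-perturbed prior density at level `σ̃`: `p̃(z) = ∫ N(z; x₀, σ̃² I) dμ₀(x₀)`
    (ptilde : EuclideanSpace ℝ (Fin n) → ℝ)
    (hptilde : ∀ z, ptilde z = ∫ x₀, gaussDensity n σtilde2 x₀ z ∂μ₀) :
    ∀ x, 0 < lik x ∧ DifferentiableAt ℝ lik x ∧
      gradient (fun z => Real.log (lik z)) x
        = (σtilde2 / σt ^ 2) • gradient (fun z => Real.log (ptilde z)) (xtilde x)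
          - gradient (fun z => Real.log (pt z)) x
          - (σy ^ 2 + σt ^ 2)⁻¹ • (x - y) :=
  exact_noisy_likelihood_score_denoising_general n μ₀ σt σy hσt hσy y pt hpt lik hlik σtilde2
    hσtilde2 xtilde hxtilde ptilde hptilde
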